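/- For a theory T containing HA: T is closed under Π_k-DML^⊥-R (from T ⊢ ¬(φ ∧ ψ) infer T ⊢ φ^⊥ ∨ ψ^⊥, for φ, ψ ∈ Π_k) if and only if T is closed under Σ_k-DNE-R (from T ⊢ ¬¬φ infer T ⊢ φ, for φ ∈ Σ_k). -/

import Mathlib

/-!
`Π_k-DML^⊥-R` ⇒ `Σ_k-DNE-R`: if `T ⊢ ¬¬χ` with `χ ∈ Σ_k`, then `χ^⊥ ∈ Π_k` refutes itself
(since `χ^⊥ → ¬χ`), so the rule gives `χ^⊥⊥ ∨ χ^⊥⊥`, and `HA ⊢ χ^⊥⊥ → χ`.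

`Σ_k-DNE-R` ⇒ `Π_k-DML^⊥-R`: by induction on the level, `T ⊢ ¬φ^⊥ → φ` for `φ ∈ Π_k` and
`T ⊢ ¬φ → φ^⊥` for `φ ∈ Σ_k`. In the step, for `θ` of the level below, `θ ∨ θ^⊥` is
`¬¬`-provable and `HA`-equivalent to a `Σ_k` formula, so the rule makes it provable; the
implications then pass through the quantifier prefix. Now `T ⊢ ¬(φ ∧ ψ)` gives
`T ⊢ ¬¬(φ^⊥ ∨ ψ^⊥)`, and `φ^⊥ ∨ ψ^⊥` is again equivalent to a `Σ_k` formula. Prenex forms of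
disjunctions exist in `HA` because `α ∨ β` is equivalent to `∃x ((x = 0 → α) ∧ (x ≠ 0 → β))`.
-/

namespace SemiClassicalArith

/-- Terms of arithmetic: variables (de Bruijn indices) and function symbols
(one symbol of each arity for every code, covering all primitive recursive functions). -/
inductive Term : Type
  | var : ℕ → Term
  | func : (code : ℕ) → (arity : ℕ) → (Fin arity → Term) → Term

namespace Term

/-- Shift all variables `≥ d` up by one. -/
def lift (d : ℕ) : Term → Term
  | var n => if n < d then var n else var (n + 1)
  | func c a ts => func c a fun i => (ts i).lift d

/-- Binder-removing substitution of `s` for variable `k`. -/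
def subst (k : ℕ) (s : Term) : Term → Term
  | var n => if n < k then var n else if n = k then s else var (n - 1)
  | func c a ts => func c a fun i => Term.subst k s (ts i)

/-- In-place replacement of variable `k` by `s` (no shifting of other variables). -/
def repl (k : ℕ) (s : Term) : Term → Term
  | var n => if n = k then s else var n
  | func c a ts => func c a fun i => Term.repl k s (ts i)

/-- Free variables of a term. -/
def fv : Term → Finset ℕ
  | var n => {n}
  | func _ _ ts => Finset.univ.sup fun i => (ts i).fv

/-- The constant zero (function symbol of arity 0, code 0). -/
def zero : Term := func 0 0 (fun i => i.elim0)

/-- Successor (function symbol of arity 1, code 1). -/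
def succ (t : Term) : Term := func 1 1 (fun _ => t)

end Term

/-- Formulas of arithmetic in the language with an extra nullary predicate
symbol `$` (`dollar`), used as a place holder. Quantifiers use de Bruijn indices. -/
inductive Formula : Type
  | falsum : Formula
  | dollar : Formula
  | eq : Term → Term → Formula
  | and : Formula → Formula → Formula
  | or : Formula → Formula → Formula
  | imp : Formula → Formula → Formula
  | all : Formula → Formula
  | ex : Formula → Formula

namespace Formula

def neg (φ : Formula) : Formula := φ.imp falsum

def iff (φ ψ : Formula) : Formula := (φ.imp ψ).and (ψ.imp φ)

/-- `¬_$ φ`, i.e. `φ → $`. -/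
def negD (φ : Formula) : Formula := φ.imp dollar

def lift (d : ℕ) : Formula → Formula
  | falsum => falsum
  | dollar => dollar
  | eq t u => eq (t.lift d) (u.lift d)
  | and φ ψ => and (φ.lift d) (ψ.lift d)
  | or φ ψ => or (φ.lift d) (ψ.lift d)
  | imp φ ψ => imp (φ.lift d) (ψ.lift d)
  | all φ => all (φ.lift (d + 1))
  | ex φ => ex (φ.lift (d + 1))

/-- Binder-removing substitution of term `s` for variable `k`. -/
def subst (k : ℕ) (s : Term) : Formula → Formula
  | falsum => falsum
  | dollar => dollar
  | eq t u => eq (Term.subst k s t) (Term.subst k s u)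
  | and φ ψ => and (Formula.subst k s φ) (Formula.subst k s ψ)
  | or φ ψ => or (Formula.subst k s φ) (Formula.subst k s ψ)
  | imp φ ψ => imp (Formula.subst k s φ) (Formula.subst k s ψ)
  | all φ => all (Formula.subst (k + 1) (s.lift 0) φ)
  | ex φ => ex (Formula.subst (k + 1) (s.lift 0) φ)

/-- In-place replacement of variable `k` by term `s`. -/
def repl (k : ℕ) (s : Term) : Formula → Formula
  | falsum => falsum
  | dollar => dollar
  | eq t u => eq (Term.repl k s t) (Term.repl k s u)
  | and φ ψ => and (Formula.repl k s φ) (Formula.repl k s ψ)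
  | or φ ψ => or (Formula.repl k s φ) (Formula.repl k s ψ)
  | imp φ ψ => imp (Formula.repl k s φ) (Formula.repl k s ψ)
  | all φ => all (Formula.repl (k + 1) (s.lift 0) φ)
  | ex φ => ex (Formula.repl (k + 1) (s.lift 0) φ)

/-- Free variables of a formula. -/
def fv : Formula → Finset ℕ
  | falsum => ∅
  | dollar => ∅
  | eq t u => t.fv ∪ u.fv
  | and φ ψ => φ.fv ∪ ψ.fv
  | or φ ψ => φ.fv ∪ ψ.fv
  | imp φ ψ => φ.fv ∪ ψ.fv
  | all φ => (φ.fv.erase 0).image (· - 1)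
  | ex φ => (φ.fv.erase 0).image (· - 1)

/-- A sentence is a formula with no free variables. -/
def sentence (φ : Formula) : Prop := φ.fv = ∅

/-- The formula is in the language of `HA` (the placeholder `$` does not occur). -/
def noDollar : Formula → Prop
  | falsum => True
  | dollar => False
  | eq _ _ => True
  | and φ ψ => φ.noDollar ∧ ψ.noDollar
  | or φ ψ => φ.noDollar ∧ ψ.noDollar
  | imp φ ψ => φ.noDollar ∧ ψ.noDollar
  | all φ => φ.noDollar
  | ex φ => φ.noDollar

/-- Quantifier-free formula of `HA`. -/
def isQF : Formula → Prop
  | falsum => True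
  | dollar => False
  | eq _ _ => True
  | and φ ψ => φ.isQF ∧ ψ.isQF
  | or φ ψ => φ.isQF ∧ ψ.isQF
  | imp φ ψ => φ.isQF ∧ ψ.isQF
  | all _ => False
  | ex _ => False

/-- Flip `+`/`-` in an alternation path (`true` = `+`, `false` = `-`). -/
def pflip (s : List Bool) : List Bool := s.map (!·)

/-- The set of alternation paths of a formula (Akama–Berardi–Hayashi–Kohlenbach). -/
def alt : Formula → Finset (List Bool)
  | falsum => {([] : List Bool)}
  | dollar => {([] : List Bool)}
  | eq _ _ => {([] : List Bool)}
  | and φ ψ => φ.alt ∪ ψ.alt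
  | or φ ψ => φ.alt ∪ ψ.alt
  | imp φ ψ => φ.alt.image pflip ∪ ψ.alt
  | all φ => φ.alt.image (fun s => if s.head? = some false then s else false :: s)
  | ex φ => φ.alt.image (fun s => if s.head? = some true then s else true :: s)

/-- The degree of a formula: the maximal length of its alternation paths. -/
def degree (φ : Formula) : ℕ := φ.alt.sup List.length

/-- The class `U_k` (for `k ≥ 1`: degree `k` and all maximal paths begin with `-`;
`U_0` is the class of degree-`0` formulas). -/
def inU (k : ℕ) (φ : Formula) : Prop :=
  φ.degree = k ∧ ∀ s ∈ φ.alt, s.length = k → k = 0 ∨ s.head? = some false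

/-- The class `E_k` (for `k ≥ 1`: degree `k` and all maximal paths begin with `+`;
`E_0` is the class of degree-`0` formulas). -/
def inE (k : ℕ) (φ : Formula) : Prop :=
  φ.degree = k ∧ ∀ s ∈ φ.alt, s.length = k → k = 0 ∨ s.head? = some true

/-- The dual of a prenex formula: swap quantifiers and negate the matrix. -/
def dual : Formula → Formula
  | all φ => ex φ.dual
  | ex φ => all φ.dual
  | φ => φ.neg

/-- The `$`-translation (Ishihara's generalized negative translation). -/
def dollarTr : Formula → Formula
  | falsum => dollar
  | dollar => dollar
  | eq t u => (eq t u).negD.negD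
  | and φ ψ => and φ.dollarTr ψ.dollarTr
  | or φ ψ => (or φ.dollarTr ψ.dollarTr).negD.negD
  | imp φ ψ => imp φ.dollarTr ψ.dollarTr
  | all φ => all φ.dollarTr
  | ex φ => (ex φ.dollarTr).negD.negD

/-- The Friedman A-translation: replace every prime formula `P` (including `⊥`)
by `P ∨ *` (here `*` is the placeholder `dollar`). -/
def aTr : Formula → Formula
  | falsum => or falsum dollar
  | dollar => dollar
  | eq t u => or (eq t u) dollar
  | and φ ψ => and φ.aTr ψ.aTr
  | or φ ψ => or φ.aTr ψ.aTr
  | imp φ ψ => imp φ.aTr ψ.aTr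
  | all φ => all φ.aTr
  | ex φ => ex φ.aTr

/-- Prefix `n` universal quantifiers. -/
def allN : Formula → ℕ → Formula
  | φ, 0 => φ
  | φ, n + 1 => Formula.allN φ.all n

/-- The universal closure of a formula. -/
def univClosure (φ : Formula) : Formula := φ.allN (φ.fv.sup Nat.succ)

end Formula

mutual
  /-- The class `Σ_k` of prenex formulas. -/
  inductive IsSigma : ℕ → Formula → Prop
    | qf {φ : Formula} : φ.isQF → IsSigma 0 φ
    | ofPi {k : ℕ} {φ : Formula} : IsPi k φ → IsSigma (k + 1) φ
    | ex {k : ℕ} {φ : Formula} : IsSigma (k + 1) φ → IsSigma (k + 1) φ.ex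
  /-- The class `Π_k` of prenex formulas. -/
  inductive IsPi : ℕ → Formula → Prop
    | qf {φ : Formula} : φ.isQF → IsPi 0 φ
    | ofSigma {k : ℕ} {φ : Formula} : IsSigma k φ → IsPi (k + 1) φ
    | all {k : ℕ} {φ : Formula} : IsPi (k + 1) φ → IsPi (k + 1) φ.all
end

/-- Axioms of Heyting arithmetic `HA` (Hilbert style intuitionistic predicate logic
with equality, plus arithmetical axioms and the induction scheme). -/
inductive HAAx : Formula → Prop
  | axK (φ ψ : Formula) : HAAx (φ.imp (ψ.imp φ))
  | axS (φ ψ χ : Formula) : HAAx ((φ.imp (ψ.imp χ)).imp ((φ.imp ψ).imp (φ.imp χ)))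
  | andI (φ ψ : Formula) : HAAx (φ.imp (ψ.imp (φ.and ψ)))
  | andE1 (φ ψ : Formula) : HAAx ((φ.and ψ).imp φ)
  | andE2 (φ ψ : Formula) : HAAx ((φ.and ψ).imp ψ)
  | orI1 (φ ψ : Formula) : HAAx (φ.imp (φ.or ψ))
  | orI2 (φ ψ : Formula) : HAAx (ψ.imp (φ.or ψ))
  | orE (φ ψ χ : Formula) : HAAx ((φ.imp χ).imp ((ψ.imp χ).imp ((φ.or ψ).imp χ)))
  | efq (φ : Formula) : HAAx (Formula.falsum.imp φ)
  | allE (φ : Formula) (t : Term) : HAAx (φ.all.imp (φ.subst 0 t))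
  | exI (φ : Formula) (t : Term) : HAAx ((φ.subst 0 t).imp φ.ex)
  | allK (φ ψ : Formula) : HAAx ((φ.imp ψ).all.imp (φ.all.imp ψ.all))
  | allVac (φ : Formula) : HAAx (φ.imp (φ.lift 0).all)
  | exE (φ ψ : Formula) : HAAx ((φ.imp (ψ.lift 0)).all.imp (φ.ex.imp ψ))
  | eqRefl (t : Term) : HAAx (Formula.eq t t)
  | eqSubst (t u : Term) (φ : Formula) : HAAx ((Formula.eq t u).imp ((φ.subst 0 t).imp (φ.subst 0 u)))
  | succNeZero (t : Term) : HAAx (Formula.neg (Formula.eq (Term.succ t) Term.zero))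
  | succInj (t u : Term) : HAAx ((Formula.eq (Term.succ t) (Term.succ u)).imp (Formula.eq t u))
  | ind (φ : Formula) : HAAx ((φ.subst 0 Term.zero).imp
      ((((φ.imp (φ.repl 0 (Term.succ (Term.var 0))))).all).imp φ.all))
  | atomDec (t u : Term) : HAAx ((Formula.eq t u).or (Formula.eq t u).neg)

/-- Provability from `HA` (in the language possibly containing `$`)
together with the extra axioms `T`. -/
inductive Proves (T : Set Formula) : Formula → Prop
  | ax {φ : Formula} : φ ∈ T → Proves T φ
  | ha {φ : Formula} : HAAx φ → Proves T φ
  | mp {φ ψ : Formula} : Proves T (φ.imp ψ) → Proves T φ → Proves T ψ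
  | gen {φ : Formula} : Proves T φ → Proves T φ.all

/-- The scheme `Σ_k-LEM`. -/
def sigLEM (k : ℕ) : Set Formula := {ψ | ∃ φ : Formula, IsSigma k φ ∧ ψ = φ.or φ.neg}

/-- The full law of excluded middle for `HA`-formulas; `Proves lemSet` is `PA`-provability. -/
def lemSet : Set Formula := {ψ | ∃ φ : Formula, φ.noDollar ∧ ψ = φ.or φ.neg}

/-- The scheme `F_k-LEM`: excluded middle for `HA`-formulas of degree at most `k`. -/
def fLEM (k : ℕ) : Set Formula :=
  {ψ | ∃ φ : Formula, φ.noDollar ∧ φ.degree ≤ k ∧ ψ = φ.or φ.neg}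

/-- `T` is (the set of extra axioms of) a semi-classical arithmetic:
`HA ⊆ HA + T ⊆ PA`, i.e. all axioms are `HA`-formulas provable in `PA`. -/
def IsSemiClassical (T : Set Formula) : Prop :=
  ∀ φ ∈ T, φ.noDollar ∧ Proves lemSet φ

mutual
  /-- The class `ℛ_{k+1}` (index `k` denotes `ℛ_{k+1}`). -/
  inductive Rcl : ℕ → Formula → Prop
    | base {k : ℕ} {φ : Formula} : φ.degree ≤ k → φ.noDollar → Rcl k φ
    | and {k : ℕ} {φ ψ : Formula} : Rcl k φ → Rcl k ψ → Rcl k (φ.and ψ)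
    | or {k : ℕ} {φ ψ : Formula} : Rcl k φ → Rcl k ψ → Rcl k (φ.or ψ)
    | all {k : ℕ} {φ : Formula} : Rcl k φ → Rcl k φ.all
    | imp {k : ℕ} {φ ψ : Formula} : Jcl k φ → Rcl k ψ → Rcl k (φ.imp ψ)
  /-- The class `𝒥_{k+1}` (index `k` denotes `𝒥_{k+1}`). -/
  inductive Jcl : ℕ → Formula → Prop
    | base {k : ℕ} {φ : Formula} : φ.degree ≤ k → φ.noDollar → Jcl k φ
    | and {k : ℕ} {φ ψ : Formula} : Jcl k φ → Jcl k ψ → Jcl k (φ.and ψ)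
    | or {k : ℕ} {φ ψ : Formula} : Jcl k φ → Jcl k ψ → Jcl k (φ.or ψ)
    | ex {k : ℕ} {φ : Formula} : Jcl k φ → Jcl k φ.ex
    | imp {k : ℕ} {φ ψ : Formula} : Rcl k φ → Jcl k ψ → Jcl k (φ.imp ψ)
end

/-- The class `𝒬_{k+1}` (index `k` denotes `𝒬_{k+1}`): generated from prime formulas by
`∧, ∨, ∀, ∃` and implications `J → Q` with `J ∈ 𝒥_{k+1}`. -/
inductive Qcl : ℕ → Formula → Prop
  | falsum {k : ℕ} : Qcl k Formula.falsum
  | eq {k : ℕ} {t u : Term} : Qcl k (Formula.eq t u)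
  | and {k : ℕ} {φ ψ : Formula} : Qcl k φ → Qcl k ψ → Qcl k (φ.and ψ)
  | or {k : ℕ} {φ ψ : Formula} : Qcl k φ → Qcl k ψ → Qcl k (φ.or ψ)
  | all {k : ℕ} {φ : Formula} : Qcl k φ → Qcl k φ.all
  | ex {k : ℕ} {φ : Formula} : Qcl k φ → Qcl k φ.ex
  | imp {k : ℕ} {φ ψ : Formula} : Jcl k φ → Qcl k ψ → Qcl k (φ.imp ψ)

/-- The class `𝒱_{k+1}` (index `k` denotes `𝒱_{k+1}`): generated from `𝒥_{k+1}` by `∧, ∀`. -/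
inductive Vcl : ℕ → Formula → Prop
  | ofJ {k : ℕ} {φ : Formula} : Jcl k φ → Vcl k φ
  | and {k : ℕ} {φ ψ : Formula} : Vcl k φ → Vcl k ψ → Vcl k (φ.and ψ)
  | all {k : ℕ} {φ : Formula} : Vcl k φ → Vcl k φ.all

/-- The class `EΠ_k`: generated from `Π_k` formulas by `∨` and `∀`. -/
inductive EPi (k : ℕ) : Formula → Prop
  | ofPi {φ : Formula} : IsPi k φ → EPi k φ
  | or {φ ψ : Formula} : EPi k φ → EPi k ψ → EPi k (φ.or ψ)
  | all {φ : Formula} : EPi k φ → EPi k φ.all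

/-- The class `EΣ_{k+1}` (index `k` denotes `EΣ_{k+1}`): existential quantifications
of `EΠ_k` formulas. -/
inductive ESig (k : ℕ) : Formula → Prop
  | ofEPi {φ : Formula} : EPi k φ → ESig k φ
  | ex {φ : Formula} : ESig k φ → ESig k φ.ex

/-- The scheme `Γ-DNEC`: universal closure of `¬¬φ` implies universal closure of `φ`. -/
def dnecSet (Γ : Set Formula) : Set Formula :=
  {ψ | ∃ φ ∈ Γ, ψ = (φ.neg.neg.univClosure).imp φ.univClosure}

/-- The scheme `Γ-DNSC`: universal closure of `¬¬φ` implies `¬¬` of the universal closure. -/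
def dnscSet (Γ : Set Formula) : Set Formula :=
  {ψ | ∃ φ ∈ Γ, ψ = (φ.neg.neg.univClosure).imp φ.univClosure.neg.neg}

/-- Double-negation elimination for sentences in `Γ`. -/
def dneSentSet (Γ : Set Formula) : Set Formula :=
  {ψ | ∃ φ ∈ Γ, φ.sentence ∧ ψ = φ.neg.neg.imp φ}

open Formula

/-- Derivations from `T` under the hypotheses `Γ`. Generalization is only available through
`thm`, i.e. never over a variable free in `Γ`, which is what makes the deduction theorem
`ProvesFrom.intro` hold. -/
inductive ProvesFrom (T : Set Formula) : List Formula → Formula → Prop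
  | hyp {Γ φ} : φ ∈ Γ → ProvesFrom T Γ φ
  | thm {Γ φ} : Proves T φ → ProvesFrom T Γ φ
  | mp {Γ φ ψ} : ProvesFrom T Γ (φ.imp ψ) → ProvesFrom T Γ φ → ProvesFrom T Γ ψ

section NaturalDeduction

variable {T : Set Formula} {Γ : List Formula} {φ ψ χ δ : Formula}

theorem Proves.imp_self : Proves T (φ.imp φ) :=
  .mp (.mp (.ha (.axS φ (φ.imp φ) φ)) (.ha (.axK φ (φ.imp φ)))) (.ha (.axK φ φ))

namespace ProvesFrom

theorem ha (h : HAAx φ) : ProvesFrom T Γ φ := thm (.ha h)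

theorem hyp0 : ProvesFrom T (φ :: Γ) φ := hyp (by simp)
theorem hyp1 : ProvesFrom T (ψ :: φ :: Γ) φ := hyp (by simp)
theorem hyp2 : ProvesFrom T (χ :: ψ :: φ :: Γ) φ := hyp (by simp)
theorem hyp3 : ProvesFrom T (δ :: χ :: ψ :: φ :: Γ) φ := hyp (by simp)

theorem intro (h : ProvesFrom T (φ :: Γ) ψ) : ProvesFrom T Γ (φ.imp ψ) := by
  induction h with
  | hyp h =>
    rcases List.mem_cons.1 h with rfl | h
    · exact thm .imp_self
    · exact mp (ha (.axK _ _)) (hyp h)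
  | thm h => exact mp (ha (.axK _ _)) (thm h)
  | mp _ _ ih₁ ih₂ => exact mp (mp (ha (.axS _ _ _)) ih₁) ih₂

theorem toProves (h : ProvesFrom T [] φ) : Proves T φ := by
  induction h with
  | hyp h => simp at h
  | thm h => exact h
  | mp _ _ ih₁ ih₂ => exact .mp ih₁ ih₂

theorem and_intro (h₁ : ProvesFrom T Γ φ) (h₂ : ProvesFrom T Γ ψ) : ProvesFrom T Γ (φ.and ψ) :=
  mp (mp (ha (.andI φ ψ)) h₁) h₂

theorem and_left (h : ProvesFrom T Γ (φ.and ψ)) : ProvesFrom T Γ φ := mp (ha (.andE1 φ ψ)) h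

theorem and_right (h : ProvesFrom T Γ (φ.and ψ)) : ProvesFrom T Γ ψ := mp (ha (.andE2 φ ψ)) h

theorem or_inl (h : ProvesFrom T Γ φ) : ProvesFrom T Γ (φ.or ψ) := mp (ha (.orI1 φ ψ)) h

theorem or_inr (h : ProvesFrom T Γ ψ) : ProvesFrom T Γ (φ.or ψ) := mp (ha (.orI2 φ ψ)) h

theorem or_elim (h : ProvesFrom T Γ (φ.or ψ)) (h₁ : ProvesFrom T Γ (φ.imp χ))
    (h₂ : ProvesFrom T Γ (ψ.imp χ)) : ProvesFrom T Γ χ :=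
  mp (mp (mp (ha (.orE φ ψ χ)) h₁) h₂) h

theorem absurd (h₁ : ProvesFrom T Γ φ) (h₂ : ProvesFrom T Γ φ.neg) : ProvesFrom T Γ ψ :=
  mp (ha (.efq ψ)) (mp h₂ h₁)

end ProvesFrom

namespace Proves

theorem imp_trans (h₁ : Proves T (φ.imp ψ)) (h₂ : Proves T (ψ.imp χ)) : Proves T (φ.imp χ) :=
  ProvesFrom.toProves <| .intro <| .mp (.thm h₂) (.mp (.thm h₁) .hyp0)

theorem contrapose (h : Proves T (φ.imp ψ)) : Proves T (ψ.neg.imp φ.neg) :=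
  ProvesFrom.toProves <| .intro <| .intro <| .mp .hyp1 (.mp (.thm h) .hyp0)

theorem neg_imp_of_or (h : Proves T (φ.or ψ)) : Proves T (ψ.neg.imp φ) :=
  ProvesFrom.toProves <| .intro <| .or_elim (.thm h) (.intro .hyp0) (.intro (.absurd .hyp0 .hyp1))

theorem not_not_or_of_neg_imp (h : Proves T (φ.neg.imp ψ)) : Proves T (φ.or ψ).neg.neg :=
  ProvesFrom.toProves <| .intro <|
    .mp .hyp0 (.or_inr (.mp (.thm h) (.intro (.mp .hyp1 (.or_inl .hyp0)))))

theorem not_not_or_of_not_and {α β : Formula} (h : Proves T (φ.and ψ).neg)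
    (hφ : Proves T (α.neg.imp φ)) (hψ : Proves T (β.neg.imp ψ)) : Proves T (α.or β).neg.neg :=
  ProvesFrom.toProves <| .intro <| .mp (.thm h) <| .and_intro
    (.mp (.thm hφ) (.intro (.mp .hyp1 (.or_inl .hyp0))))
    (.mp (.thm hψ) (.intro (.mp .hyp1 (.or_inr .hyp0))))

end Proves

end NaturalDeduction

section Substitution

theorem Term.subst_lift (t : Term) (k : ℕ) (s : Term) : Term.subst k s (t.lift k) = t := by
  induction t generalizing k with
  | var n =>
    by_cases h : n < k
    · simp [Term.lift, Term.subst, h]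
    · simp [Term.lift, Term.subst, h, show ¬n + 1 < k by omega, show n + 1 ≠ k by omega]
  | func c a ts ih => simp only [Term.lift, Term.subst, ih]

theorem Formula.subst_lift (φ : Formula) (k : ℕ) (s : Term) : (φ.lift k).subst k s = φ := by
  induction φ generalizing k s <;> simp [Formula.lift, Formula.subst, Term.subst_lift, *]

theorem Term.subst_var_lift_succ (t : Term) (k : ℕ) :
    Term.subst k (.var k) (t.lift (k + 1)) = t := by
  induction t generalizing k with
  | var n =>
    by_cases h : n < k + 1
    · by_cases h' : n < k
      · simp [Term.lift, Term.subst, h, h']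
      · obtain rfl : n = k := by omega
        simp [Term.lift, Term.subst]
    · simp [Term.lift, Term.subst, h, show ¬n + 1 < k by omega, show n + 1 ≠ k by omega]
  | func c a ts ih => simp only [Term.lift, Term.subst, ih]

theorem Formula.subst_var_lift_succ (φ : Formula) (k : ℕ) :
    (φ.lift (k + 1)).subst k (.var k) = φ := by
  induction φ generalizing k with
  | all φ ih | ex φ ih => simp [Formula.lift, Formula.subst, Term.lift, ih (k + 1)]
  | _ => simp [Formula.lift, Formula.subst, Term.subst_var_lift_succ, *]

theorem Term.subst_zero (k : ℕ) (s : Term) : Term.subst k s .zero = .zero :=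
  congrArg _ (funext fun i => i.elim0)

end Substitution

section Quantifiers

namespace Proves

variable {T : Set Formula} {α β γ : Formula}

theorem all_imp_all (h : Proves T (α.imp β)) : Proves T (α.all.imp β.all) :=
  .mp (.ha (.allK α β)) (.gen h)

theorem imp_lift_ex : Proves T (α.imp (α.ex.lift 0)) := by
  have h := Proves.ha (T := T) (.exI (α.lift 1) (.var 0))
  rwa [Formula.subst_var_lift_succ] at h

theorem lift_all_imp : Proves T ((α.all.lift 0).imp α) := by
  have h := Proves.ha (T := T) (.allE (α.lift 1) (.var 0))
  rwa [Formula.subst_var_lift_succ] at h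

theorem all_lift_imp_self : Proves T ((β.lift 0).all.imp β) := by
  simpa only [Formula.subst_lift] using Proves.ha (T := T) (.allE (β.lift 0) .zero)

theorem ex_imp_of_imp_lift (h : Proves T (α.imp (β.lift 0))) : Proves T (α.ex.imp β) :=
  .mp (.ha (.exE α β)) (.gen h)

theorem imp_all_of_lift_imp (h : Proves T ((α.lift 0).imp β)) : Proves T (α.imp β.all) :=
  (Proves.ha (.allVac α)).imp_trans (.mp (.ha (.allK _ _)) (.gen h))

theorem ex_imp_ex (h : Proves T (α.imp β)) : Proves T (α.ex.imp β.ex) :=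
  ex_imp_of_imp_lift (h.imp_trans imp_lift_ex)

theorem not_ex_imp_all_not : Proves T (α.ex.neg.imp α.neg.all) :=
  imp_all_of_lift_imp (contrapose imp_lift_ex)

theorem all_not_imp_not_ex : Proves T (α.neg.all.imp α.ex.neg) := .ha (.exE α .falsum)

end Proves

end Quantifiers

section Classes

theorem Formula.isQF.lift {φ : Formula} (h : φ.isQF) (d : ℕ) : (φ.lift d).isQF := by
  induction φ generalizing d with
  | falsum | eq => trivial
  | dollar | all | ex => exact h.elim
  | and _ _ ih₁ ih₂ | or _ _ ih₁ ih₂ | imp _ _ ih₁ ih₂ => exact ⟨ih₁ h.1 d, ih₂ h.2 d⟩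

theorem Formula.isQF.dual_eq {φ : Formula} (h : φ.isQF) : φ.dual = φ.neg := by
  cases φ <;> first | rfl | exact h.elim

theorem IsSigma.isQF {φ : Formula} (h : IsSigma 0 φ) : φ.isQF := by cases h; assumption

theorem IsPi.isQF {φ : Formula} (h : IsPi 0 φ) : φ.isQF := by cases h; assumption


mutual
theorem IsSigma.succ {j : ℕ} {φ : Formula} : IsSigma j φ → IsSigma (j + 1) φ
  | .qf h => .ofPi (.qf h)
  | .ofPi h => .ofPi h.succ
  | .ex h => .ex h.succ
theorem IsPi.succ {j : ℕ} {φ : Formula} : IsPi j φ → IsPi (j + 1) φ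
  | .qf h => .ofSigma (.qf h)
  | .ofSigma h => .ofSigma h.succ
  | .all h => .all h.succ
end

theorem IsSigma.mono {j k : ℕ} {φ : Formula} (hjk : j ≤ k) (h : IsSigma j φ) : IsSigma k φ := by
  induction hjk with
  | refl => exact h
  | step _ ih => exact ih.succ

mutual
theorem IsSigma.lift {j : ℕ} {φ : Formula} (h : IsSigma j φ) (d : ℕ) : IsSigma j (φ.lift d) :=
  match h with
  | .qf h => .qf (h.lift d)
  | .ofPi h => .ofPi (h.lift d)
  | .ex h => .ex (h.lift (d + 1))
theorem IsPi.lift {j : ℕ} {φ : Formula} (h : IsPi j φ) (d : ℕ) : IsPi j (φ.lift d) :=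
  match h with
  | .qf h => .qf (h.lift d)
  | .ofSigma h => .ofSigma (h.lift d)
  | .all h => .all (h.lift (d + 1))
end

mutual
theorem IsSigma.dual {j : ℕ} {φ : Formula} : IsSigma j φ → IsPi j φ.dual
  | .qf h => h.dual_eq ▸ .qf ⟨h, trivial⟩
  | .ofPi h => .ofSigma h.dual
  | .ex h => .all h.dual
theorem IsPi.dual {j : ℕ} {φ : Formula} : IsPi j φ → IsSigma j φ.dual
  | .qf h => h.dual_eq ▸ .qf ⟨h, trivial⟩
  | .ofSigma h => .ofPi h.dual
  | .all h => .ex h.dual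
end

@[elab_as_elim]
theorem IsSigma.succ_induction {j : ℕ} {φ : Formula}
    {motive : (φ : Formula) → IsSigma (j + 1) φ → Prop}
    (ofPi : ∀ φ (h : IsPi j φ), motive φ (.ofPi h))
    (ex : ∀ φ (h : IsSigma (j + 1) φ), motive φ h → motive φ.ex (.ex h))
    (h : IsSigma (j + 1) φ) : motive φ h := by
  induction φ with
  | ex φ ih =>
    cases h with
    | ofPi h => exact ofPi _ h
    | ex h => exact ex _ h (ih h)
  | _ => cases h; exact ofPi _ ‹_›

@[elab_as_elim]
theorem IsPi.succ_induction {j : ℕ} {φ : Formula}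
    {motive : (φ : Formula) → IsPi (j + 1) φ → Prop}
    (ofSigma : ∀ φ (h : IsSigma j φ), motive φ (.ofSigma h))
    (all : ∀ φ (h : IsPi (j + 1) φ), motive φ h → motive φ.all (.all h))
    (h : IsPi (j + 1) φ) : motive φ h := by
  induction φ with
  | all φ ih =>
    cases h with
    | ofSigma h => exact ofSigma _ h
    | all h => exact all _ h (ih h)
  | _ => cases h; exact ofSigma _ ‹_›

end Classes

section Duals

variable {T : Set Formula}

theorem Proves.or_neg_of_isQF {φ : Formula} (h : φ.isQF) : Proves T (φ.or φ.neg) := by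
  induction φ with
  | falsum => exact .mp (.ha (.orI2 _ _)) .imp_self
  | eq t u => exact .ha (.atomDec t u)
  | dollar | all | ex => exact h.elim
  | and φ ψ ih₁ ih₂ =>
    exact ProvesFrom.toProves <| .or_elim (.thm (ih₁ h.1))
      (.intro <| .or_elim (.thm (ih₂ h.2))
        (.intro <| .or_inl (.and_intro .hyp1 .hyp0))
        (.intro <| .or_inr <| .intro <| .mp .hyp1 (.and_right .hyp0)))
      (.intro <| .or_inr <| .intro <| .mp .hyp1 (.and_left .hyp0))
  | or φ ψ ih₁ ih₂ =>
    exact ProvesFrom.toProves <| .or_elim (.thm (ih₁ h.1))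
      (.intro <| .or_inl (.or_inl .hyp0))
      (.intro <| .or_elim (.thm (ih₂ h.2))
        (.intro <| .or_inl (.or_inr .hyp0))
        (.intro <| .or_inr <| .intro <| .or_elim .hyp0
          (.intro (.mp .hyp3 .hyp0)) (.intro (.mp .hyp2 .hyp0))))
  | imp φ ψ ih₁ ih₂ =>
    exact ProvesFrom.toProves <| .or_elim (.thm (ih₂ h.2))
      (.intro <| .or_inl <| .intro .hyp1)
      (.intro <| .or_elim (.thm (ih₁ h.1))
        (.intro <| .or_inr <| .intro <| .mp .hyp2 (.mp .hyp0 .hyp1))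
        (.intro <| .or_inl <| .intro <| .absurd .hyp0 .hyp1))

theorem Proves.not_not_imp_of_isQF {φ : Formula} (h : φ.isQF) : Proves T (φ.neg.neg.imp φ) :=
  (Proves.or_neg_of_isQF h).neg_imp_of_or

theorem Formula.dual_imp_neg (φ : Formula) : Proves T (φ.dual.imp φ.neg) := by
  induction φ with
  | all φ ih => exact .ex_imp_of_imp_lift (ih.imp_trans (.contrapose .lift_all_imp))
  | ex φ ih => exact (Proves.all_imp_all ih).imp_trans .all_not_imp_not_ex
  | _ => exact .imp_self

mutual
theorem IsSigma.dual_dual_imp {j : ℕ} {φ : Formula} : IsSigma j φ → Proves T (φ.dual.dual.imp φ)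
  | .qf h => by rw [h.dual_eq]; exact .not_not_imp_of_isQF h
  | .ofPi h => h.dual_dual_imp
  | .ex h => .ex_imp_ex h.dual_dual_imp
theorem IsPi.dual_dual_imp {j : ℕ} {φ : Formula} : IsPi j φ → Proves T (φ.dual.dual.imp φ)
  | .qf h => by rw [h.dual_eq]; exact .not_not_imp_of_isQF h
  | .ofSigma h => h.dual_dual_imp
  | .all h => .all_imp_all h.dual_dual_imp
end

end Duals

section Prenex

def ProvablyEquiv (T : Set Formula) (α β : Formula) : Prop :=
  Proves T (α.imp β) ∧ Proves T (β.imp α)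

namespace ProvablyEquiv

variable {T : Set Formula} {α β γ δ α' β' : Formula}

theorem refl (α : Formula) : ProvablyEquiv T α α := ⟨.imp_self, .imp_self⟩

theorem trans (h₁ : ProvablyEquiv T α β) (h₂ : ProvablyEquiv T β γ) : ProvablyEquiv T α γ :=
  ⟨h₁.1.imp_trans h₂.1, h₂.2.imp_trans h₁.2⟩

theorem all (h : ProvablyEquiv T α β) : ProvablyEquiv T α.all β.all :=
  ⟨.all_imp_all h.1, .all_imp_all h.2⟩

theorem ex (h : ProvablyEquiv T α β) : ProvablyEquiv T α.ex β.ex :=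
  ⟨.ex_imp_ex h.1, .ex_imp_ex h.2⟩

theorem and (h : ProvablyEquiv T α α') (h' : ProvablyEquiv T β β') :
    ProvablyEquiv T (α.and β) (α'.and β') :=
  ⟨ProvesFrom.toProves <| .intro <|
      .and_intro (.mp (.thm h.1) (.and_left .hyp0)) (.mp (.thm h'.1) (.and_right .hyp0)),
    ProvesFrom.toProves <| .intro <|
      .and_intro (.mp (.thm h.2) (.and_left .hyp0)) (.mp (.thm h'.2) (.and_right .hyp0))⟩

theorem and_comm (α β : Formula) : ProvablyEquiv T (α.and β) (β.and α) :=
  have swap {α β : Formula} : Proves T ((α.and β).imp (β.and α)) :=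
    ProvesFrom.toProves <| .intro <| .and_intro (.and_right .hyp0) (.and_left .hyp0)
  ⟨swap, swap⟩

theorem or_comm (α β : Formula) : ProvablyEquiv T (α.or β) (β.or α) :=
  have swap {α β : Formula} : Proves T ((α.or β).imp (β.or α)) :=
    ProvesFrom.toProves <| .intro <|
      .or_elim .hyp0 (.intro (.or_inr .hyp0)) (.intro (.or_inl .hyp0))
  ⟨swap, swap⟩

theorem ex_and_lift (α β : Formula) : ProvablyEquiv T (α.and (β.lift 0)).ex (α.ex.and β) := by
  refine ⟨.ex_imp_of_imp_lift <| ProvesFrom.toProves <| .intro <|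
    .and_intro (.mp (.thm .imp_lift_ex) (.and_left .hyp0)) (.and_right .hyp0), ?_⟩
  have h : Proves T (α.ex.imp (β.imp (α.and (β.lift 0)).ex)) :=
    .ex_imp_of_imp_lift <| ProvesFrom.toProves <| .intro <| .intro <|
      .mp (.thm .imp_lift_ex) (.and_intro .hyp1 .hyp0)
  exact ProvesFrom.toProves <| .intro <| .mp (.mp (.thm h) (.and_left .hyp0)) (.and_right .hyp0)

theorem all_and_lift (α β : Formula) : ProvablyEquiv T (α.and (β.lift 0)).all (α.all.and β) := by
  refine ⟨ProvesFrom.toProves <| .intro <| .and_intro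
    (.mp (.thm (.all_imp_all (.ha (.andE1 _ _)))) .hyp0)
    (.mp (.thm ((Proves.all_imp_all (.ha (.andE2 _ _))).imp_trans .all_lift_imp_self)) .hyp0), ?_⟩
  have h : Proves T (α.all.imp ((β.lift 0).all.imp (α.and (β.lift 0)).all)) :=
    .imp_trans (.mp (.ha (.allK _ _)) (.gen (.ha (.andI _ _)))) (.ha (.allK _ _))
  exact ProvesFrom.toProves <| .intro <|
    .mp (.mp (.thm h) (.and_left .hyp0)) (.mp (.ha (.allVac β)) (.and_right .hyp0))

theorem ex_or_lift (α β : Formula) : ProvablyEquiv T (α.or (β.lift 0)).ex (α.ex.or β) := by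
  refine ⟨.ex_imp_of_imp_lift <| ProvesFrom.toProves <| .intro <| .or_elim .hyp0
    (.intro (.or_inl (.mp (.thm .imp_lift_ex) .hyp0))) (.intro (.or_inr .hyp0)), ?_⟩
  have hβ : Proves T (β.imp (α.or (β.lift 0)).ex) := by
    have h := Proves.ha (T := T) (.exI (α.or (β.lift 0)) .zero)
    simp only [Formula.subst, Formula.subst_lift] at h
    exact (Proves.ha (.orI2 _ _)).imp_trans h
  exact ProvesFrom.toProves <| .intro <| .or_elim .hyp0
    (.thm (.ex_imp_ex (.ha (.orI1 _ _)))) (.thm hβ)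

theorem all_lift_imp (γ δ : Formula) : ProvablyEquiv T ((γ.lift 0).imp δ).all (γ.imp δ.all) :=
  ⟨ProvesFrom.toProves <| .intro <| .intro <|
      .mp (.mp (.ha (.allK _ _)) .hyp1) (.mp (.ha (.allVac γ)) .hyp0),
    .imp_all_of_lift_imp <| ProvesFrom.toProves <| .intro <| .intro <|
      .mp (.thm .lift_all_imp) (.mp .hyp1 .hyp0)⟩

/-- If `γ` fails, `0` is a witness; this is where `γ` has to be decidable. -/
theorem ex_lift_imp (hγ : γ.isQF) (δ : Formula) :
    ProvablyEquiv T ((γ.lift 0).imp δ).ex (γ.imp δ.ex) := by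
  refine ⟨.ex_imp_of_imp_lift <| ProvesFrom.toProves <| .intro <| .intro <|
    .mp (.thm .imp_lift_ex) (.mp .hyp1 .hyp0), ?_⟩
  have hzero := Proves.ha (T := T) (.exI ((γ.lift 0).imp δ) .zero)
  simp only [Formula.subst, Formula.subst_lift] at hzero
  exact ProvesFrom.toProves <| .intro <| .or_elim (.thm (.or_neg_of_isQF hγ))
    (.intro <| .mp (.thm (.ex_imp_ex (.ha (.axK _ _)))) (.mp .hyp1 .hyp0))
    (.intro <| .mp (.thm hzero) (.intro (.absurd .hyp0 .hyp1)))

theorem ex_cases_or (α β : Formula) :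
    ProvablyEquiv T
      ((((eq (.var 0) .zero).imp (α.lift 0)).and ((eq (.var 0) .zero).neg.imp (β.lift 0))).ex)
      (α.or β) := by
  refine ⟨.ex_imp_of_imp_lift <| ProvesFrom.toProves <| .intro <|
    .or_elim (.ha (.atomDec (.var 0) .zero))
      (.intro (.or_inl (.mp (.and_left .hyp1) .hyp0)))
      (.intro (.or_inr (.mp (.and_right .hyp1) .hyp0))), ?_⟩
  have hwit (t : Term) := Proves.ha (T := T) (.exI
    (((eq (.var 0) .zero).imp (α.lift 0)).and ((eq (.var 0) .zero).neg.imp (β.lift 0))) t)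
  simp only [Formula.subst, Formula.subst_lift, Term.subst_zero, Formula.neg, Term.subst,
    lt_irrefl, if_false, if_true] at hwit
  exact ProvesFrom.toProves <| .intro <| .or_elim .hyp0
    (.intro <| .mp (.thm (hwit .zero)) <|
      .and_intro (.intro .hyp1) (.intro (.absurd (.ha (.eqRefl _)) .hyp0)))
    (.intro <| .mp (.thm (hwit (.succ .zero))) <|
      .and_intro (.intro (.absurd .hyp0 (.ha (.succNeZero _)))) (.intro .hyp1))

end ProvablyEquiv

end Prenex

section Merging

def InUpToEquiv (C : Formula → Prop) (φ : Formula) : Prop :=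
  ∃ m, C m ∧ ∀ T, ProvablyEquiv T m φ

def ClosedUpToEquiv (C : Formula → Prop) (op : Formula → Formula → Formula) : Prop :=
  ∀ α β, C α → C β → InUpToEquiv C (op α β)

variable {C : Formula → Prop} {j : ℕ} {φ ψ : Formula}

theorem InUpToEquiv.of_mem (h : C φ) : InUpToEquiv C φ := ⟨φ, h, fun _ => .refl φ⟩

theorem InUpToEquiv.trans (h : InUpToEquiv C φ) (e : ∀ T, ProvablyEquiv T φ ψ) :
    InUpToEquiv C ψ :=
  let ⟨m, hm, e'⟩ := h; ⟨m, hm, fun T => (e' T).trans (e T)⟩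

theorem InUpToEquiv.mono {C' : Formula → Prop} (h : InUpToEquiv C φ) (hC : ∀ φ, C φ → C' φ) :
    InUpToEquiv C' φ :=
  let ⟨m, hm, e⟩ := h; ⟨m, hC m hm, e⟩

theorem InUpToEquiv.ex (h : InUpToEquiv (IsSigma (j + 1)) φ) :
    InUpToEquiv (IsSigma (j + 1)) φ.ex :=
  let ⟨m, hm, e⟩ := h; ⟨m.ex, .ex hm, fun T => (e T).ex⟩

theorem InUpToEquiv.all (h : InUpToEquiv (IsPi (j + 1)) φ) : InUpToEquiv (IsPi (j + 1)) φ.all :=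
  let ⟨m, hm, e⟩ := h; ⟨m.all, .all hm, fun T => (e T).all⟩

mutual
theorem IsSigma.imp_inUpToEquiv {j : ℕ} {γ δ : Formula} (h : IsSigma j δ) (hγ : γ.isQF) :
    InUpToEquiv (IsSigma j) (γ.imp δ) :=
  match h with
  | .qf h => .of_mem (.qf ⟨hγ, h⟩)
  | .ofPi h => (h.imp_inUpToEquiv hγ).mono fun _ => .ofPi
  | .ex h => (h.imp_inUpToEquiv (hγ.lift 0)).ex.trans fun _ => .ex_lift_imp hγ _
theorem IsPi.imp_inUpToEquiv {j : ℕ} {γ δ : Formula} (h : IsPi j δ) (hγ : γ.isQF) :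
    InUpToEquiv (IsPi j) (γ.imp δ) :=
  match h with
  | .qf h => .of_mem (.qf ⟨hγ, h⟩)
  | .ofSigma h => (h.imp_inUpToEquiv hγ).mono fun _ => .ofSigma
  | .all h => (h.imp_inUpToEquiv (hγ.lift 0)).all.trans fun _ => .all_lift_imp _ _
end

theorem ClosedUpToEquiv.isSigma_succ {op : Formula → Formula → Formula}
    (comm : ∀ {T} α β, ProvablyEquiv T (op α β) (op β α))
    (pull : ∀ {T} α β, ProvablyEquiv T (op α (β.lift 0)).ex (op α.ex β))
    (base : ∀ α β, IsPi j α → IsPi j β → InUpToEquiv (IsSigma (j + 1)) (op α β)) :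
    ClosedUpToEquiv (IsSigma (j + 1)) op := by
  have key : ∀ P : Formula → Prop, (∀ β, P β → P (β.lift 0)) →
      (∀ α β, IsPi j α → P β → InUpToEquiv (IsSigma (j + 1)) (op α β)) →
      ∀ α β, IsSigma (j + 1) α → P β → InUpToEquiv (IsSigma (j + 1)) (op α β) := by
    intro P hP hbase α β hα hβ
    induction hα using IsSigma.succ_induction generalizing β with
    | ofPi α hα => exact hbase α β hα hβ
    | ex α _ ih => exact (ih (β.lift 0) (hP β hβ)).ex.trans fun _ => pull α β
  exact key _ (fun _ h => h.lift 0) fun α β hα hβ =>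
    (key _ (fun _ h => h.lift 0) base β α hβ hα).trans fun _ => comm β α

theorem ClosedUpToEquiv.isPi_succ {op : Formula → Formula → Formula}
    (comm : ∀ {T} α β, ProvablyEquiv T (op α β) (op β α))
    (pull : ∀ {T} α β, ProvablyEquiv T (op α (β.lift 0)).all (op α.all β))
    (base : ∀ α β, IsSigma j α → IsSigma j β → InUpToEquiv (IsPi (j + 1)) (op α β)) :
    ClosedUpToEquiv (IsPi (j + 1)) op := by
  have key : ∀ P : Formula → Prop, (∀ β, P β → P (β.lift 0)) →
      (∀ α β, IsSigma j α → P β → InUpToEquiv (IsPi (j + 1)) (op α β)) →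
      ∀ α β, IsPi (j + 1) α → P β → InUpToEquiv (IsPi (j + 1)) (op α β) := by
    intro P hP hbase α β hα hβ
    induction hα using IsPi.succ_induction generalizing β with
    | ofSigma α hα => exact hbase α β hα hβ
    | all α _ ih => exact (ih (β.lift 0) (hP β hβ)).all.trans fun _ => pull α β
  exact key _ (fun _ h => h.lift 0) fun α β hα hβ =>
    (key _ (fun _ h => h.lift 0) base β α hβ hα).trans fun _ => comm β α

theorem closedUpToEquiv_and : ∀ j,
    ClosedUpToEquiv (IsSigma j) Formula.and ∧ ClosedUpToEquiv (IsPi j) Formula.and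
  | 0 => ⟨fun _ _ hα hβ => .of_mem (.qf ⟨hα.isQF, hβ.isQF⟩),
      fun _ _ hα hβ => .of_mem (.qf ⟨hα.isQF, hβ.isQF⟩)⟩
  | j + 1 =>
    ⟨.isSigma_succ .and_comm .ex_and_lift fun α β hα hβ =>
        ((closedUpToEquiv_and j).2 α β hα hβ).mono fun _ => .ofPi,
      .isPi_succ .and_comm .all_and_lift fun α β hα hβ =>
        ((closedUpToEquiv_and j).1 α β hα hβ).mono fun _ => .ofSigma⟩

theorem IsPi.or_inUpToEquiv_isSigma_succ {α β : Formula} (hα : IsPi j α) (hβ : IsPi j β) :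
    InUpToEquiv (IsSigma (j + 1)) (α.or β) := by
  let γ := Formula.eq (.var 0) .zero
  obtain ⟨P, hP, eP⟩ := (hα.lift 0).imp_inUpToEquiv (γ := γ) trivial
  obtain ⟨Q, hQ, eQ⟩ := (hβ.lift 0).imp_inUpToEquiv (γ := γ.neg) ⟨trivial, trivial⟩
  exact ((closedUpToEquiv_and j).2 P Q hP hQ).trans (fun T => (eP T).and (eQ T))
    |>.mono (fun _ => .ofPi) |>.ex.trans fun _ => .ex_cases_or α β

theorem closedUpToEquiv_or : ∀ k, ClosedUpToEquiv (IsSigma k) Formula.or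
  | 0 => fun _ _ hα hβ => .of_mem (.qf ⟨hα.isQF, hβ.isQF⟩)
  | _ + 1 => .isSigma_succ .or_comm .ex_or_lift fun _ _ => IsPi.or_inUpToEquiv_isSigma_succ

end Merging

section Rules

/-- The rule `Σ_k-DNE-R`. -/
def ClosedUnderDNE (k : ℕ) (T : Set Formula) : Prop :=
  ∀ φ, IsSigma k φ → Proves T φ.neg.neg → Proves T φ

/-- The rule `Π_k-DML^⊥-R`. -/
def ClosedUnderDMLDual (k : ℕ) (T : Set Formula) : Prop :=
  ∀ φ ψ, IsPi k φ → IsPi k ψ → Proves T (φ.and ψ).neg → Proves T (φ.dual.or ψ.dual)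

variable {T : Set Formula} {j k : ℕ} {α β θ : Formula}

theorem ClosedUnderDMLDual.closedUnderDNE (H : ClosedUnderDMLDual k T) : ClosedUnderDNE k T := by
  intro χ hχ hnn
  have hcontra : Proves T (χ.dual.and χ.dual).neg :=
    ProvesFrom.toProves <| .intro <| .mp (.thm hnn) (.mp (.thm χ.dual_imp_neg) (.and_left .hyp0))
  exact ProvesFrom.toProves <| .or_elim (.thm (H _ _ hχ.dual hχ.dual hcontra))
    (.thm hχ.dual_dual_imp) (.thm hχ.dual_dual_imp)

theorem ClosedUnderDNE.mono (H : ClosedUnderDNE k T) (hjk : j ≤ k) : ClosedUnderDNE j T :=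
  fun φ hφ => H φ (hφ.mono hjk)

theorem ClosedUnderDNE.or (H : ClosedUnderDNE k T) (hα : IsSigma k α) (hβ : IsSigma k β)
    (h : Proves T (α.or β).neg.neg) : Proves T (α.or β) := by
  obtain ⟨m, hm, e⟩ := closedUpToEquiv_or k α β hα hβ
  exact (e T).1.mp (H m hm ((e T).2.contrapose.contrapose.mp h))

theorem ClosedUnderDNE.neg_imp_swap (H : ClosedUnderDNE k T) (hα : IsSigma k α)
    (hβ : IsSigma k β) (h : Proves T (α.neg.imp β)) : Proves T (β.neg.imp α) :=
  (H.or hα hβ h.not_not_or_of_neg_imp).neg_imp_of_or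

theorem IsSigma.neg_imp_dual_of_isPi (hπ : ∀ π, IsPi j π → Proves T (π.neg.imp π.dual))
    (h : IsSigma (j + 1) θ) : Proves T (θ.neg.imp θ.dual) := by
  induction h using IsSigma.succ_induction with
  | ofPi θ h => exact hπ θ h
  | ex θ _ ih => exact Proves.not_ex_imp_all_not.imp_trans (.all_imp_all ih)

theorem IsPi.dual_neg_imp_of_isSigma (hσ : ∀ σ, IsSigma j σ → Proves T (σ.dual.neg.imp σ))
    (h : IsPi (j + 1) θ) : Proves T (θ.dual.neg.imp θ) := by
  induction h using IsPi.succ_induction with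
  | ofSigma θ h => exact hσ θ h
  | all θ _ ih => exact Proves.not_ex_imp_all_not.imp_trans (.all_imp_all ih)

theorem ClosedUnderDNE.neg_imp_dual_and_dual_neg_imp (H : ClosedUnderDNE k T) :
    (IsSigma k θ → Proves T (θ.neg.imp θ.dual)) ∧ (IsPi k θ → Proves T (θ.dual.neg.imp θ)) := by
  induction k generalizing θ with
  | zero =>
    exact ⟨fun h => h.isQF.dual_eq ▸ .imp_self,
      fun h => h.isQF.dual_eq ▸ .not_not_imp_of_isQF h.isQF⟩
  | succ k ih =>
    have ih θ := @ih θ (H.mono k.le_succ)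
    exact ⟨IsSigma.neg_imp_dual_of_isPi fun π hπ =>
        H.neg_imp_swap hπ.dual.succ (.ofPi hπ) ((ih π).2 hπ),
      IsPi.dual_neg_imp_of_isSigma fun σ hσ =>
        H.neg_imp_swap hσ.succ (.ofPi hσ.dual) ((ih σ).1 hσ)⟩

theorem ClosedUnderDNE.closedUnderDMLDual (H : ClosedUnderDNE k T) : ClosedUnderDMLDual k T :=
  fun _ _ hφ hψ h => H.or hφ.dual hψ.dual <| h.not_not_or_of_not_and
    (H.neg_imp_dual_and_dual_neg_imp.2 hφ) (H.neg_imp_dual_and_dual_neg_imp.2 hψ)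

end Rules

/-- `T` is closed under `Π_k-DML^⊥-R` iff `T` is closed under
`Σ_k-DNE-R`. -/
theorem dml_dual_iff_dne (k : ℕ) (T : Set Formula) :
    (∀ φ ψ : Formula, IsPi k φ → IsPi k ψ →
        Proves T (φ.and ψ).neg → Proves T (φ.dual.or ψ.dual)) ↔
    (∀ φ : Formula, IsSigma k φ → Proves T φ.neg.neg → Proves T φ) :=
  ⟨ClosedUnderDMLDual.closedUnderDNE, ClosedUnderDNE.closedUnderDMLDual⟩

end SemiClassicalArith
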